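/- For a balanced n-colored partition λ̄ (same number of boxes of each color), the sign (−1)^{Σ_i ht(ν_i)} obtained from any decomposition of λ̄ into a sequence of n-border strips (ν_1, ..., ν_{|λ̄|/n}) successively removed from λ̄ is independent of the choice of border strip decomposition. -/

import Mathlib

/-- A partition: a non-increasing, eventually-zero sequence of non-negative integers. -/
structure Ptn where
  f : ℕ → ℕ
  anti : ∀ i, f (i + 1) ≤ f i
  ev : ∃ N, ∀ i, N ≤ i → f i = 0

/-- The size `|ρ|` of a partition: the number of boxes. -/
noncomputable def Ptn.size (ρ : Ptn) : ℕ := ∑ᶠ i, ρ.f i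

/-- The set `S(ρ) = {ρ_i - (i+1) : i ≥ 0} ⊆ ℤ`. -/
def Ptn.S (ρ : Ptn) : Set ℤ := {t | ∃ i : ℕ, t = (ρ.f i : ℤ) - (i + 1)}

/-- The conjugate partition: `ρ'_j = #{i : ρ_i > j}`. -/
noncomputable def Ptn.conj (ρ : Ptn) (j : ℕ) : ℕ := Set.ncard {i : ℕ | j < ρ.f i}

/-- The interlacing relation `τ ≻ σ`: `τ_0 ≥ σ_0 ≥ τ_1 ≥ σ_1 ≥ ...`. -/
def Interlace (τ σ : Ptn) : Prop := ∀ i, σ.f i ≤ τ.f i ∧ τ.f (i + 1) ≤ σ.f i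

/-- The set of boxes of a partition (row, column), 0-indexed. -/
def Ptn.cells (ρ : Ptn) : Set (ℕ × ℕ) := {p | p.2 < ρ.f p.1}

/-- The interlaced-slope-sequence condition: `Λ̄(t) = λ_{t mod n}((t - t mod n)/n)`,
i.e. `(λ_0, ..., λ_{n-1})` is the `n`-quotient of `Λ`. -/
def SlopeQuot (n : ℕ) (lam : ℕ → Ptn) (Λ : Ptn) : Prop :=
  ∀ t : ℤ, t ∈ Λ.S ↔ t.ediv n ∈ (lam (t.emod n).toNat).S

/-- The number of boxes of `Λ` of color `c`, where box `(i,j)` has color `(j - i) mod n`. -/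
noncomputable def colorCount (n : ℕ) (Λ : Ptn) (c : ℤ) : ℕ :=
  ∑ᶠ i : ℕ, ((Finset.range (Λ.f i)).filter (fun j : ℕ => ((j : ℤ) - (i : ℤ)).emod n = c)).card

/-- `Λ` is balanced: it has the same number of boxes of each color mod `n`. -/
def BalancedPtn (n : ℕ) (Λ : Ptn) : Prop :=
  ∀ c c' : ℤ, colorCount n Λ c = colorCount n Λ c'

/-- Two boxes are adjacent if they share an edge. -/
def Adj (a b : ℕ × ℕ) : Prop :=
  (a.1 = b.1 ∧ (a.2 + 1 = b.2 ∨ b.2 + 1 = a.2)) ∨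
  (a.2 = b.2 ∧ (a.1 + 1 = b.1 ∨ b.1 + 1 = a.1))

/-- A set of boxes is connected (via edge-adjacency, through the set). -/
def ConnectedBoxes (D : Set (ℕ × ℕ)) : Prop :=
  ∀ a ∈ D, ∀ b ∈ D, Relation.ReflTransGen (fun x y => y ∈ D ∧ Adj x y) a b

/-- A set of boxes contains no 2×2 square. -/
def No2x2 (D : Set (ℕ × ℕ)) : Prop :=
  ¬ ∃ r s : ℕ, (r, s) ∈ D ∧ (r + 1, s) ∈ D ∧ (r, s + 1) ∈ D ∧ (r + 1, s + 1) ∈ D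

/-- A border strip with `n` boxes: a finite connected set of `n` boxes with no 2×2 square. -/
def IsBorderStrip (n : ℕ) (D : Set (ℕ × ℕ)) : Prop :=
  D.Finite ∧ D.ncard = n ∧ ConnectedBoxes D ∧ No2x2 D

/-- The height of a strip: the number of rows it occupies, minus one. -/
noncomputable def htS (D : Set (ℕ × ℕ)) : ℕ := Set.ncard {r | ∃ s, (r, s) ∈ D} - 1

/-- A decomposition of `Λ` into `m` successively removed `n`-border strips:
`Λ = c 0 ⊇ c 1 ⊇ ... ⊇ c m = ∅` with each consecutive difference an `n`-border strip. -/
def StripDecomp (n : ℕ) (Λ : Ptn) (m : ℕ) (c : ℕ → Ptn) : Prop :=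
  c 0 = Λ ∧ (∀ i, (c m).f i = 0) ∧
  ∀ t, t < m → (c (t + 1)).cells ⊆ (c t).cells ∧
    IsBorderStrip n ((c t).cells \ (c (t + 1)).cells)

/-!
Read a partition `ρ` through its beta-set `ρ.S ⊆ ℤ` as an abacus with `n` runners (the residue
classes mod `n`). Removing an `n`-border strip moves one bead `s` to the empty position `s - n`,
and the height of the strip is the number of beads strictly between `s - n` and `s`.
Pushing every runner up against `0` sends the bead `x` to `packedPos n S x`, which depends only on
the order of the beads along each runner; so the move changes no packed position, the moved bead
inheriting the one of `s`. The inversions of `packedPos` therefore change, mod 2, by the number of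
beads between `s - n` and `s`, i.e. by the height. The empty partition has no inversions, so along
any decomposition `(-1) ^ Σ ht` is `(-1) ^ #inversions` of `Λ`.
-/

namespace Abacus

open Set
open scoped symmDiff

variable {n : ℕ} {S : Set ℤ} {s x y : ℤ}

def beadsAbove (n : ℕ) (S : Set ℤ) (x : ℤ) : Set ℤ := {y ∈ S | x < y ∧ (n : ℤ) ∣ y - x}

/-- The position of bead `x` once every runner (residue class mod `n`) of the abacus `S` is
pushed up against `0`. -/
noncomputable def packedPos (n : ℕ) (S : Set ℤ) (x : ℤ) : ℤ :=
  x % n - n - n * (beadsAbove n S x).ncard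

def packInversions (n : ℕ) (S : Set ℤ) : Set (ℤ × ℤ) :=
  {p | p.1 ∈ S ∧ p.2 ∈ S ∧ p.2 < p.1 ∧ packedPos n S p.1 < packedPos n S p.2}

def EventuallyPacked (n : ℕ) (S : Set ℤ) : Prop :=
  ∃ B, ∀ x < B, x ∈ S ∧ packedPos n S x = x

def moveBead (n : ℕ) (S : Set ℤ) (s : ℤ) : Set ℤ := insert (s - n) (S \ {s})

lemma finite_inter_Ioi (hS : BddAbove S) (x : ℤ) : (S ∩ Ioi x).Finite :=
  (bddBelow_Ioi.mono inter_subset_right).finite_of_bddAbove (hS.mono inter_subset_left)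

lemma finite_beadsAbove (hS : BddAbove S) (x : ℤ) : (beadsAbove n S x).Finite :=
  (finite_inter_Ioi hS x).subset fun _ hy => ⟨hy.1, hy.2.1⟩

lemma packedPos_modEq : packedPos n S x ≡ x [ZMOD n] := by
  have h : packedPos n S x = x % n + n * (-1 - (beadsAbove n S x).ncard) := by
    unfold packedPos; ring
  rw [h]
  exact ((Int.mod_modEq x n).add_right _).trans (by simp [Int.ModEq])

lemma packedPos_lt_of_dvd (hn : 0 < n) (hS : BddAbove S) (hx : x ∈ S) (hyx : y < x)
    (hdvd : (n : ℤ) ∣ x - y) : packedPos n S y < packedPos n S x := by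
  have hsub : insert x (beadsAbove n S x) ⊆ beadsAbove n S y := by
    rintro z (rfl | ⟨hz, hxz, hdz⟩)
    · exact ⟨hx, hyx, hdvd⟩
    · exact ⟨hz, hyx.trans hxz, by simpa using dvd_add hdz hdvd⟩
  have hcard : (beadsAbove n S x).ncard + 1 ≤ (beadsAbove n S y).ncard := by
    rw [← ncard_insert_of_notMem (fun h => h.2.1.false) (finite_beadsAbove hS x)]
    exact ncard_le_ncard hsub (finite_beadsAbove hS y)
  have hmod : y % n = x % n := Int.modEq_of_dvd hdvd
  have hcard' : (n : ℤ) * ((beadsAbove n S x).ncard + 1) ≤ n * (beadsAbove n S y).ncard :=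
    mul_le_mul_of_nonneg_left (by exact_mod_cast hcard) (by positivity)
  unfold packedPos
  rw [hmod]
  linarith

lemma packedPos_injOn (hn : 0 < n) (hS : BddAbove S) : InjOn (packedPos n S) S := by
  intro x hx y hy hxy
  have hmod : y ≡ x [ZMOD n] :=
    packedPos_modEq.symm.trans (by rw [← hxy]; exact packedPos_modEq)
  by_contra hne
  rcases lt_or_gt_of_ne hne with h | h
  · exact (packedPos_lt_of_dvd hn hS hy h hmod.symm.dvd).ne hxy
  · exact (packedPos_lt_of_dvd hn hS hx h hmod.dvd).ne' hxy

/-- Packed positions only see the order of the beads along each runner. -/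
lemma packedPos_image {e : ℤ ≃ ℤ} (he : ∀ z, e z ≡ z [ZMOD n])
    (hord : ∀ x ∈ S, ∀ z ∈ S, (n : ℤ) ∣ z - x → (x < z ↔ e x < e z)) (hx : x ∈ S) :
    packedPos n (e '' S) (e x) = packedPos n S x := by
  have hbeads : beadsAbove n (e '' S) (e x) = e '' beadsAbove n S x := by
    ext w
    obtain ⟨z, rfl⟩ := e.surjective w
    have hdvd : (n : ℤ) ∣ e z - e x ↔ (n : ℤ) ∣ z - x := by
      rw [← Int.modEq_zero_iff_dvd, ← Int.modEq_zero_iff_dvd]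
      exact ⟨((he z).symm.sub (he x).symm).trans, ((he z).sub (he x)).trans⟩
    simp only [beadsAbove, e.injective.mem_set_image, mem_ofPred_eq, hdvd]
    exact ⟨fun ⟨hz, hlt, hd⟩ => ⟨hz, (hord x hx z hz hd).2 hlt, hd⟩,
      fun ⟨hz, hlt, hd⟩ => ⟨hz, (hord x hx z hz hd).1 hlt, hd⟩⟩
  unfold packedPos
  rw [hbeads, ncard_image_of_injective _ e.injective, he x]

lemma not_dvd_sub_of_mem_Ioo (h : y ∈ Ioo (s - n) s) : ¬ (n : ℤ) ∣ y - s := fun hdvd => by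
  rw [mem_Ioo] at h
  exact (sub_neg.2 h.2).ne (Int.eq_zero_of_abs_lt_dvd hdvd (abs_lt.2 ⟨by omega, by omega⟩))

lemma mem_moveBead : y ∈ moveBead n S s ↔ y = s - n ∨ y ∈ S ∧ y ≠ s := by
  simp [moveBead]

lemma bddAbove_moveBead (hS : BddAbove S) : BddAbove (moveBead n S s) :=
  (hS.mono sdiff_subset).insert _

lemma moveBead_eq_image_swap (hn : 0 < n) (hs : s ∈ S) (hsn : s - n ∉ S) :
    moveBead n S s = Equiv.swap s (s - n) '' S := by
  ext y
  rw [Equiv.image_eq_preimage_symm, Equiv.symm_swap, mem_preimage, Equiv.swap_apply_def,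
    mem_moveBead]
  split_ifs <;> subst_vars <;> simp_all; omega

lemma lt_iff_swap_lt_swap (hsn : s - n ∉ S) (hx : x ∈ S) (hy : y ∈ S)
    (hdvd : (n : ℤ) ∣ y - x) :
    x < y ↔ Equiv.swap s (s - n) x < Equiv.swap s (s - n) y := by
  have hx' : x ≠ s - n := fun h => hsn (h ▸ hx)
  have hy' : y ≠ s - n := fun h => hsn (h ▸ hy)
  have hrunner : ∀ z ∈ S, (n : ℤ) ∣ z - s → z ∉ Ioo (s - n) s := fun z _ hd hz =>
    not_dvd_sub_of_mem_Ioo hz hd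
  rcases eq_or_ne x s with hxs | hxs <;> rcases eq_or_ne y s with hys | hys
  · rw [hxs, hys, lt_self_iff_false, lt_self_iff_false]
  · subst x
    have := hrunner y hy hdvd
    rw [Equiv.swap_apply_left, Equiv.swap_apply_of_ne_of_ne hys hy']
    simp only [mem_Ioo] at this
    omega
  · subst y
    have := hrunner x hx (dvd_sub_comm.1 hdvd)
    rw [Equiv.swap_apply_left, Equiv.swap_apply_of_ne_of_ne hxs hx']
    simp only [mem_Ioo] at this
    omega
  · rw [Equiv.swap_apply_of_ne_of_ne hxs hx', Equiv.swap_apply_of_ne_of_ne hys hy']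

lemma packedPos_moveBead (hn : 0 < n) (hs : s ∈ S) (hsn : s - n ∉ S) (hx : x ∈ S) :
    packedPos n (moveBead n S s) (Equiv.swap s (s - n) x) = packedPos n S x := by
  rw [moveBead_eq_image_swap hn hs hsn]
  refine packedPos_image (fun z => ?_) (fun x hx z hz => lt_iff_swap_lt_swap hsn hx hz) hx
  rw [Equiv.swap_apply_def]
  split_ifs with h₁ h₂
  · simp [h₁, Int.modEq_iff_dvd]
  · simp [h₂, Int.modEq_iff_dvd]
  · rfl

lemma packedPos_moveBead_of_ne (hn : 0 < n) (hs : s ∈ S) (hsn : s - n ∉ S) (hx : x ∈ S)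
    (hxs : x ≠ s) : packedPos n (moveBead n S s) x = packedPos n S x := by
  rw [← packedPos_moveBead hn hs hsn hx, Equiv.swap_apply_of_ne_of_ne hxs]
  rintro rfl
  exact hsn hx

lemma packedPos_moveBead_sub (hn : 0 < n) (hs : s ∈ S) (hsn : s - n ∉ S) :
    packedPos n (moveBead n S s) (s - n) = packedPos n S s := by
  rw [← packedPos_moveBead hn hs hsn hs, Equiv.swap_apply_left]

lemma EventuallyPacked.of_moveBead (hn : 0 < n) (hs : s ∈ S) (hsn : s - n ∉ S)
    (h : EventuallyPacked n (moveBead n S s)) : EventuallyPacked n S := by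
  obtain ⟨B, hB⟩ := h
  refine ⟨min B (s - n), fun x hx => ?_⟩
  obtain ⟨hxS', hxP⟩ := hB x (hx.trans_le (min_le_left _ _))
  have hxs : x < s - n := hx.trans_le (min_le_right _ _)
  have hxS : x ∈ S := by
    rcases mem_moveBead.1 hxS' with h | h
    · omega
    · exact h.1
  exact ⟨hxS, packedPos_moveBead_of_ne hn hs hsn hxS (by omega) ▸ hxP⟩

lemma EventuallyPacked.finite_packInversions (hS : BddAbove S) (h : EventuallyPacked n S) :
    (packInversions n S).Finite := by
  obtain ⟨B, hB⟩ := h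
  -- Beads below `B` sit at their own packed positions, so they are in no inversion among
  -- themselves; this bounds both beads of an inversion from below.
  refine ((finite_inter_Ioi hS (B - 1)).biUnion fun x _ =>
    (finite_inter_Ioi hS (min B (packedPos n S x) - 1)).image (Prod.mk x)).subset ?_
  rintro ⟨x, y⟩ ⟨hx, hy, hyx, hP⟩
  have hxB : B ≤ x := by
    by_contra! hxB
    linarith [(hB x hxB).2, (hB y (hyx.trans hxB)).2]
  have hyB : min B (packedPos n S x) ≤ y := by
    by_contra! hyB
    linarith [(hB y (hyB.trans_le (min_le_left _ _))).2, min_le_right B (packedPos n S x)]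
  exact mem_biUnion ⟨hx, by simp only [mem_Ioi]; omega⟩
    ⟨y, ⟨hy, by simp only [mem_Ioi]; omega⟩, rfl⟩

def invPartners (n : ℕ) (S : Set ℤ) (s : ℤ) : Set ℤ :=
  {y ∈ S | y < s ∧ packedPos n S s < packedPos n S y ∨ s < y ∧ packedPos n S y < packedPos n S s}

lemma injective_max_min (s : ℤ) : Function.Injective fun y => (max s y, min s y) :=
  fun y y' h => by simp only [Prod.ext_iff] at h; omega

lemma image_invPartners (hs : s ∈ S) :
    (fun y => (max s y, min s y)) '' invPartners n S s =
      packInversions n S ∩ {q | q.1 = s ∨ q.2 = s} := by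
  ext ⟨a, b⟩
  simp only [invPartners, packInversions, mem_image, mem_inter_iff, mem_ofPred_eq, Prod.mk.injEq]
  constructor
  · rintro ⟨y, ⟨hy, ⟨hys, hP⟩ | ⟨hsy, hP⟩⟩, rfl, rfl⟩
    · rw [max_eq_left hys.le, min_eq_right hys.le]
      exact ⟨⟨hs, hy, hys, hP⟩, .inl rfl⟩
    · rw [max_eq_right hsy.le, min_eq_left hsy.le]
      exact ⟨⟨hy, hs, hsy, hP⟩, .inr rfl⟩
  · rintro ⟨⟨ha, hb, hba, hP⟩, rfl | rfl⟩
    · exact ⟨b, ⟨hb, .inl ⟨hba, hP⟩⟩, max_eq_left hba.le, min_eq_right hba.le⟩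
    · exact ⟨a, ⟨ha, .inr ⟨hba, hP⟩⟩, max_eq_right hba.le, min_eq_left hba.le⟩

lemma ncard_packInversions (hs : s ∈ S) (hfin : (packInversions n S).Finite) :
    (packInversions n S).ncard =
      (invPartners n S s).ncard + (packInversions n S \ {q | q.1 = s ∨ q.2 = s}).ncard := by
  rw [← ncard_image_of_injective _ (injective_max_min s), image_invPartners hs,
    ncard_inter_add_ncard_sdiff_eq_ncard _ _ hfin]

lemma finite_invPartners (hs : s ∈ S) (hfin : (packInversions n S).Finite) :
    (invPartners n S s).Finite :=
  Finite.of_finite_image (image_invPartners hs ▸ hfin.inter_of_left _)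
    (injective_max_min s).injOn

lemma mem_moveBead_of_ne (hyn : y ≠ s - n) : y ∈ moveBead n S s ↔ y ∈ S ∧ y ≠ s := by
  simp [mem_moveBead, hyn]

lemma packInversions_moveBead_sdiff (hn : 0 < n) (hs : s ∈ S) (hsn : s - n ∉ S) :
    packInversions n (moveBead n S s) \ {q | q.1 = s - n ∨ q.2 = s - n} =
      packInversions n S \ {q | q.1 = s ∨ q.2 = s} := by
  have hS : ∀ y, y ∈ moveBead n S s ∧ y ≠ s - n ↔ y ∈ S ∧ y ≠ s := fun y => by
    by_cases hyn : y = s - n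
    · exact ⟨fun h => (h.2 hyn).elim, fun h => (hsn (hyn ▸ h.1)).elim⟩
    · rw [mem_moveBead_of_ne hyn]
      exact ⟨fun h => h.1, fun h => ⟨h, hyn⟩⟩
  ext ⟨x, y⟩
  simp only [packInversions, mem_sdiff, mem_ofPred_eq, not_or]
  constructor
  · rintro ⟨⟨hx, hy, hyx, hP⟩, hxn, hyn⟩
    obtain ⟨hx, hxs⟩ := (hS x).1 ⟨hx, hxn⟩
    obtain ⟨hy, hys⟩ := (hS y).1 ⟨hy, hyn⟩
    rw [packedPos_moveBead_of_ne hn hs hsn hx hxs, packedPos_moveBead_of_ne hn hs hsn hy hys] at hP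
    exact ⟨⟨hx, hy, hyx, hP⟩, hxs, hys⟩
  · rintro ⟨⟨hx, hy, hyx, hP⟩, hxs, hys⟩
    obtain ⟨hx', hxn⟩ := (hS x).2 ⟨hx, hxs⟩
    obtain ⟨hy', hyn⟩ := (hS y).2 ⟨hy, hys⟩
    rw [← packedPos_moveBead_of_ne hn hs hsn hx hxs,
      ← packedPos_moveBead_of_ne hn hs hsn hy hys] at hP
    exact ⟨⟨hx', hy', hyx, hP⟩, hxn, hyn⟩

/-- Moving `s` down to `s - n` flips its order with exactly the beads strictly in between. -/
lemma invPartners_moveBead (hn : 0 < n) (hS : BddAbove S) (hs : s ∈ S) (hsn : s - n ∉ S) :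
    invPartners n (moveBead n S s) (s - n) = invPartners n S s ∆ (S ∩ Ioo (s - n) s) := by
  ext y
  simp only [invPartners, mem_symmDiff, mem_inter_iff, mem_Ioo, mem_ofPred_eq,
    packedPos_moveBead_sub hn hs hsn]
  by_cases hyS : y ∈ S
  · by_cases hys : y = s
    · subst hys
      have hy : y ∉ moveBead n S y := by
        rw [mem_moveBead]
        omega
      simp [hy]
    · have hP := packedPos_injOn hn hS hyS hs |>.mt hys
      have hyn : y ≠ s - n := fun h => hsn (h ▸ hyS)
      simp only [mem_moveBead_of_ne hyn, packedPos_moveBead_of_ne hn hs hsn hyS hys, hyS, hys,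
        true_and, ne_eq, not_false_eq_true]
      omega
  · simp only [mem_moveBead, hyS, false_and, or_false, iff_false]
    rintro ⟨rfl, h⟩
    omega

lemma neg_one_pow_ncard_symmDiff {α : Type*} {A B : Set α} (hA : A.Finite) (hB : B.Finite) :
    (-1 : ℤ) ^ (A ∆ B).ncard = (-1) ^ A.ncard * (-1) ^ B.ncard := by
  have hunion : A ∆ B ∪ A ∩ B = A ∪ B := symmDiff_sup_inf A B
  have hdisj : Disjoint (A ∆ B) (A ∩ B) := disjoint_symmDiff_inf A B
  have h₁ := ncard_union_eq hdisj ((hA.union hB).subset symmDiff_le_sup) (hA.inter_of_left B)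
  have h₂ := ncard_union_add_ncard_inter A B hA hB
  rw [hunion] at h₁
  calc (-1 : ℤ) ^ (A ∆ B).ncard = (-1) ^ ((A ∆ B).ncard + 2 * (A ∩ B).ncard) := by
        rw [pow_add, pow_mul]; norm_num
    _ = (-1) ^ A.ncard * (-1) ^ B.ncard := by rw [← pow_add]; congr 1; omega

lemma neg_one_pow_ncard_packInversions_moveBead (hn : 0 < n) (hS : BddAbove S) (hs : s ∈ S)
    (hsn : s - n ∉ S) (hfin : (packInversions n S).Finite)
    (hfin' : (packInversions n (moveBead n S s)).Finite) :
    (-1 : ℤ) ^ (packInversions n S).ncard =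
      (-1) ^ (packInversions n (moveBead n S s)).ncard * (-1) ^ (S ∩ Ioo (s - n) s).ncard := by
  have hsn' : s - n ∈ moveBead n S s := mem_insert _ _
  rw [ncard_packInversions hs hfin, ncard_packInversions hsn' hfin',
    packInversions_moveBead_sdiff hn hs hsn, invPartners_moveBead hn hS hs hsn, pow_add, pow_add,
    neg_one_pow_ncard_symmDiff (finite_invPartners hs hfin)
      ((finite_inter_Ioi hS (s - n)).subset (inter_subset_inter_right _ Ioo_subset_Ioi_self))]
  have hsq : ((-1 : ℤ) ^ (S ∩ Ioo (s - n) s).ncard) ^ 2 = 1 := by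
    rw [← pow_mul, mul_comm, pow_mul]; norm_num
  linear_combination (-(-1 : ℤ) ^ (invPartners n S s).ncard *
    (-1) ^ (packInversions n S \ {q | q.1 = s ∨ q.2 = s}).ncard) * hsq

lemma packedPos_Iio (hn : 0 < n) (hx : x < 0) : packedPos n (Iio 0) x = x := by
  have hn' : (0 : ℤ) < n := by exact_mod_cast hn
  have hdiv := Int.emod_add_mul_ediv x n
  have hr := Int.emod_nonneg x hn'.ne'
  have hr' := Int.emod_lt_of_pos x hn'
  have hbeads : beadsAbove n (Iio 0) x = (x + n * ·) '' Icc 1 (-(x / n) - 1) := by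
    ext y
    simp only [beadsAbove, mem_Iio, mem_image, mem_Icc, mem_ofPred_eq]
    constructor
    · rintro ⟨hy, hxy, k, hk⟩
      refine ⟨k, ⟨?_, ?_⟩, by linarith⟩ <;> nlinarith
    · rintro ⟨k, ⟨hk₁, hk₂⟩, rfl⟩
      refine ⟨?_, ?_, k, by ring⟩ <;> nlinarith
  have hcard : ((beadsAbove n (Iio 0) x).ncard : ℤ) = -(x / n) - 1 := by
    rw [hbeads, ncard_image_of_injective _ fun a b h => by simpa [hn.ne'] using h,
      ← Finset.coe_Icc, ncard_coe_finset, Int.card_Icc]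
    have : x / n < 0 := Int.ediv_neg_of_neg_of_pos hx hn'
    omega
  unfold packedPos
  rw [hcard]
  linarith

lemma eventuallyPacked_Iio (hn : 0 < n) : EventuallyPacked n (Iio 0) :=
  ⟨0, fun _ hx => ⟨hx, packedPos_Iio hn hx⟩⟩

lemma packInversions_Iio (hn : 0 < n) : packInversions n (Iio 0) = ∅ := by
  refine eq_empty_of_forall_notMem fun ⟨x, y⟩ ⟨hx, hy, hyx, hP⟩ => ?_
  rw [packedPos_Iio hn hx, packedPos_Iio hn hy] at hP
  exact hyx.not_gt hP

end Abacus

lemma sum_Icc_sub_eq_of_succ_eq {f g : ℕ → ℤ} {a b : ℕ} (hab : a ≤ b)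
    (h : ∀ i, a ≤ i → i < b → f (i + 1) = g i + 1) :
    ∑ i ∈ Finset.Icc a b, (f i - g i) = f a - g b + (b - a) := by
  induction b, hab using Nat.le_induction with
  | base => simp
  | succ b hab ih =>
    rw [Finset.sum_Icc_succ_top (by omega), ih fun i hai hib => h i hai (by omega),
      h b hab (by omega)]
    push_cast
    ring

section StrictAnti

open Set

variable {β : ℕ → ℤ} {a b : ℕ} {t : ℤ}

lemma StrictAnti.notMem_range_of_lt_of_lt (hβ : StrictAnti β) (hlow : β (b + 1) < t)
    (hhigh : t < β b) : t ∉ range β := by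
  rintro ⟨j, rfl⟩
  rcases le_or_gt j b with h | h
  · exact (hβ.antitone h).not_gt hhigh
  · exact (hβ.antitone (Nat.succ_le_of_lt h)).not_gt hlow

lemma StrictAnti.ncard_range_inter_Ioo (hβ : StrictAnti β) (hab : a ≤ b) (hlow : β (b + 1) < t)
    (hhigh : t < β b) : (range β ∩ Ioo t (β a)).ncard = b - a := by
  have : range β ∩ Ioo t (β a) = β '' Icc (a + 1) b := by
    ext y
    constructor
    · rintro ⟨⟨j, rfl⟩, hj₁, hj₂⟩
      refine ⟨j, ⟨hβ.lt_iff_gt.1 hj₂, ?_⟩, rfl⟩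
      exact Nat.lt_succ_iff.1 (hβ.lt_iff_gt.1 (hlow.trans hj₁))
    · rintro ⟨j, ⟨hj₁, hj₂⟩, rfl⟩
      exact ⟨mem_range_self j, hhigh.trans_le (hβ.antitone hj₂), hβ (by omega)⟩
  rw [this, ncard_image_of_injective _ hβ.injective, ncard_Icc_nat]
  omega

lemma StrictAnti.range_eq_moveBead (hβ : StrictAnti β) {β' : ℕ → ℤ} {n : ℕ} (hab : a ≤ b)
    (hout : ∀ i, i < a ∨ b < i → β' i = β i) (hmid : ∀ i, a ≤ i → i < b → β' i = β (i + 1))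
    (hb : β' b = β a - n) : range β' = Abacus.moveBead n (range β) (β a) := by
  have hfwd : ∀ i, β' i = β a - n ∨ ∃ j ≠ a, β' i = β j := fun i => by
    rcases lt_or_ge i a with h | h
    · exact .inr ⟨i, h.ne, hout i (.inl h)⟩
    rcases lt_or_ge i b with h' | h'
    · exact .inr ⟨i + 1, by omega, hmid i h h'⟩
    rcases h'.eq_or_lt with rfl | h'
    · exact .inl hb
    · exact .inr ⟨i, by omega, hout i (.inr h')⟩
  have hbwd : ∀ j ≠ a, ∃ i, β' i = β j := fun j hj => by
    rcases lt_or_gt_of_ne hj with h | h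
    · exact ⟨j, hout j (.inl h)⟩
    rcases le_or_gt j b with h' | h'
    · exact ⟨j - 1, by rw [hmid _ (by omega) (by omega), Nat.sub_add_cancel (by omega)]⟩
    · exact ⟨j, hout j (.inr h')⟩
  ext y
  simp only [Abacus.moveBead, mem_insert_iff, mem_sdiff, mem_range, mem_singleton_iff]
  constructor
  · rintro ⟨i, rfl⟩
    rcases hfwd i with h | ⟨j, hj, h⟩
    · exact .inl h
    · exact .inr ⟨⟨j, h.symm⟩, h ▸ hβ.injective.ne hj⟩
  · rintro (rfl | ⟨⟨j, rfl⟩, hj⟩)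
    · exact ⟨b, hb⟩
    · exact hbwd j fun h => hj (h ▸ rfl)

end StrictAnti

section Boxes

variable {D : Set (ℕ × ℕ)}

lemma ConnectedBoxes.ordConnected_rows (hD : ConnectedBoxes D) :
    Set.OrdConnected {r | ∃ s, (r, s) ∈ D} := by
  refine ⟨fun a ⟨s, ha⟩ b ⟨t, hb⟩ r hr => ?_⟩
  have key : ∀ q, Relation.ReflTransGen (fun x y => y ∈ D ∧ Adj x y) (a, s) q →
      r ≤ q.1 → ∃ s, (r, s) ∈ D := by
    intro q hq
    induction hq with
    | refl => exact fun h => ⟨s, le_antisymm h hr.1 ▸ ha⟩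
    | @tail p q _ hpq ih =>
      intro hrq
      by_cases hrp : r ≤ p.1
      · exact ih hrp
      · have : r = q.1 := by rcases hpq.2 with ⟨h, _⟩ | ⟨_, h | h⟩ <;> omega
        exact ⟨q.2, this ▸ hpq.1⟩
  exact key _ (hD _ ha _ hb) hr.2

lemma ConnectedBoxes.exists_vertical_adj (hD : ConnectedBoxes D) {i : ℕ}
    (hi : ∃ s, (i, s) ∈ D) (hi' : ∃ s, (i + 1, s) ∈ D) :
    ∃ s, (i, s) ∈ D ∧ (i + 1, s) ∈ D := by
  obtain ⟨⟨s, hs⟩, ⟨t, ht⟩⟩ := And.intro hi hi'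
  by_contra! hno
  -- Without a vertical step from row `i` to row `i + 1`, no path from row `i` gets below it.
  have key : ∀ q, Relation.ReflTransGen (fun x y => y ∈ D ∧ Adj x y) (i, s) q →
      q ∈ D ∧ q.1 ≤ i := by
    intro q hq
    induction hq with
    | refl => exact ⟨hs, le_rfl⟩
    | @tail p q _ hpq ih =>
      refine ⟨hpq.1, ?_⟩
      rcases hpq.2 with ⟨h, _⟩ | ⟨h, h' | h'⟩
      · omega
      · by_contra hqi
        have hpi : p.1 = i := by omega
        exact hno p.2 (hpi ▸ ih.1) (by rw [← hpi, h', h]; exact hpq.1)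
      · omega
  exact absurd (key _ (hD _ hs _ ht)).2 (by simp)

end Boxes

namespace Ptn

open Set

variable {ρ lam mu : Ptn}

def beta (ρ : Ptn) (i : ℕ) : ℤ := ρ.f i - (i + 1)

lemma S_eq_range_beta (ρ : Ptn) : ρ.S = range ρ.beta := by
  ext
  simp [Ptn.S, beta, eq_comm]

lemma strictAnti_beta (ρ : Ptn) : StrictAnti ρ.beta :=
  strictAnti_nat_of_succ_lt fun i => by
    have := ρ.anti i
    simp only [beta]
    push_cast
    omega

lemma bddAbove_S (ρ : Ptn) : BddAbove ρ.S := by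
  rw [S_eq_range_beta]
  exact ⟨ρ.beta 0, forall_mem_range.2 fun i => ρ.strictAnti_beta.antitone (Nat.zero_le i)⟩

lemma S_eq_Iio_of_f_eq_zero (h : ∀ i, ρ.f i = 0) : ρ.S = Iio 0 := by
  ext x
  simp only [Ptn.S, h, mem_ofPred_eq, mem_Iio, Nat.cast_zero, zero_sub]
  exact ⟨by rintro ⟨i, rfl⟩; omega, fun hx => ⟨(-x - 1).toNat, by omega⟩⟩

lemma mem_cells_sdiff {p : ℕ × ℕ} :
    p ∈ lam.cells \ mu.cells ↔ mu.f p.1 ≤ p.2 ∧ p.2 < lam.f p.1 := by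
  simp [Ptn.cells, and_comm]

lemma exists_mem_cells_sdiff_iff {i : ℕ} :
    (∃ s, (i, s) ∈ lam.cells \ mu.cells) ↔ mu.f i < lam.f i := by
  simp only [mem_cells_sdiff]
  exact ⟨fun ⟨_, h₁, h₂⟩ => h₁.trans_lt h₂, fun h => ⟨_, le_rfl, h⟩⟩

lemma rows_cells_sdiff : {r | ∃ s, (r, s) ∈ lam.cells \ mu.cells} = {i | mu.f i < lam.f i} :=
  ext fun _ => exists_mem_cells_sdiff_iff

lemma f_le_of_cells_subset (h : mu.cells ⊆ lam.cells) (i : ℕ) : mu.f i ≤ lam.f i := by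
  by_contra! hlt
  exact lt_irrefl (lam.f i) (h (show (i, lam.f i) ∈ mu.cells from hlt))

lemma f_succ_le_of_no2x2 (h : No2x2 (lam.cells \ mu.cells)) (i : ℕ) :
    lam.f (i + 1) ≤ mu.f i + 1 := by
  by_contra! hlt
  have := lam.anti i
  have := mu.anti i
  exact h ⟨i, mu.f i, by simp only [mem_cells_sdiff]; omega⟩

lemma lt_f_succ_of_connectedBoxes (h : ConnectedBoxes (lam.cells \ mu.cells)) {i : ℕ}
    (hi : mu.f i < lam.f i) (hi' : mu.f (i + 1) < lam.f (i + 1)) : mu.f i < lam.f (i + 1) := by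
  obtain ⟨s, h₁, h₂⟩ := h.exists_vertical_adj (exists_mem_cells_sdiff_iff.2 hi)
    (exists_mem_cells_sdiff_iff.2 hi')
  rw [mem_cells_sdiff] at h₁ h₂
  exact h₁.1.trans_lt h₂.2

lemma ncard_cells_sdiff {I : Finset ℕ} (hI : ∀ i, mu.f i < lam.f i → i ∈ I) :
    (lam.cells \ mu.cells).ncard = ∑ i ∈ I, (lam.f i - mu.f i) := by
  have hD : lam.cells \ mu.cells =
      ↑(I.biUnion fun i => {i} ×ˢ Finset.Ico (mu.f i) (lam.f i)) := by
    ext ⟨i, j⟩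
    simp only [mem_cells_sdiff, Finset.coe_biUnion, mem_iUnion, Finset.mem_coe,
      Finset.mem_product, Finset.mem_singleton, Finset.mem_Ico]
    exact ⟨fun h => ⟨i, hI i (h.1.trans_lt h.2), rfl, h⟩, fun ⟨_, _, rfl, h⟩ => h⟩
  rw [hD, ncard_coe_finset, Finset.card_biUnion]
  · simp
  · intro i _ j _ hij
    simp only [Finset.disjoint_left, Finset.mem_product, Finset.mem_singleton]
    exact fun p hp hq => hij (hp.1.symm.trans hq.1)

lemma exists_Icc_of_isBorderStrip {n : ℕ} (hn : 0 < n) (hsub : mu.cells ⊆ lam.cells)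
    (hD : IsBorderStrip n (lam.cells \ mu.cells)) :
    ∃ a b, a ≤ b ∧ {i | mu.f i < lam.f i} = Icc a b ∧
      (∀ i, a ≤ i → i < b → lam.f (i + 1) = mu.f i + 1) ∧
      (mu.f b : ℤ) + n = lam.f a + (b - a) := by
  obtain ⟨hfin, hcard, hconn, hno2x2⟩ := hD
  have hrows := rows_cells_sdiff (lam := lam) (mu := mu)
  set R := {i | mu.f i < lam.f i}
  have hR : R.Nonempty := by
    obtain ⟨⟨r, s⟩, h⟩ := nonempty_of_ncard_ne_zero (hcard ▸ hn.ne')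
    exact ⟨r, exists_mem_cells_sdiff_iff.1 ⟨s, h⟩⟩
  have hRfin : R.Finite :=
    hrows ▸ (hfin.image Prod.fst).subset fun r ⟨s, h⟩ => ⟨_, h, rfl⟩
  have hRIcc := (hR.ordConnected_iff_of_bdd (OrderBot.bddBelow R) hRfin.bddAbove).1
    (hrows ▸ hconn.ordConnected_rows)
  set a := sInf R
  set b := sSup R
  have hab : a ≤ b := nonempty_Icc.1 (hRIcc ▸ hR)
  have hrow (i : ℕ) : mu.f i < lam.f i ↔ a ≤ i ∧ i ≤ b := Set.ext_iff.1 hRIcc i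
  have hsum : (n : ℤ) = ∑ i ∈ Finset.Icc a b, ((lam.f i : ℤ) - mu.f i) := by
    rw [← hcard, ncard_cells_sdiff fun i hi => Finset.mem_Icc.2 ((hrow i).1 hi), Nat.cast_sum]
    exact Finset.sum_congr rfl fun i _ => Nat.cast_sub (f_le_of_cells_subset hsub i)
  have hstep : ∀ i, a ≤ i → i < b → lam.f (i + 1) = mu.f i + 1 := fun i hai hib =>
    le_antisymm (f_succ_le_of_no2x2 hno2x2 i) <| lt_f_succ_of_connectedBoxes hconn
      ((hrow i).2 ⟨hai, hib.le⟩) ((hrow (i + 1)).2 ⟨by omega, hib⟩)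
  refine ⟨a, b, hab, hRIcc, hstep, ?_⟩
  rw [hsum, sum_Icc_sub_eq_of_succ_eq hab fun i hai hib => by exact_mod_cast hstep i hai hib]
  ring

theorem exists_moveBead_of_isBorderStrip {n : ℕ} (hn : 0 < n) (hsub : mu.cells ⊆ lam.cells)
    (hD : IsBorderStrip n (lam.cells \ mu.cells)) :
    ∃ s ∈ lam.S, s - n ∉ lam.S ∧ mu.S = Abacus.moveBead n lam.S s ∧
      htS (lam.cells \ mu.cells) = (lam.S ∩ Ioo (s - n) s).ncard := by
  obtain ⟨a, b, hab, hrows, hstep, hb⟩ := exists_Icc_of_isBorderStrip hn hsub hD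
  have hrow (i : ℕ) : mu.f i < lam.f i ↔ a ≤ i ∧ i ≤ b := Set.ext_iff.1 hrows i
  have hout : ∀ i, i < a ∨ b < i → mu.beta i = lam.beta i := fun i hi => by
    have := f_le_of_cells_subset hsub i
    have : ¬ mu.f i < lam.f i := by rw [hrow]; omega
    simp only [beta]
    omega
  have hmid : ∀ i, a ≤ i → i < b → mu.beta i = lam.beta (i + 1) := fun i hai hib => by
    simp only [beta, hstep i hai hib]
    push_cast
    ring
  have hbeta : mu.beta b = lam.beta a - n := by
    simp only [beta]
    omega
  have hlow : lam.beta (b + 1) < lam.beta a - n := by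
    rw [← hbeta, ← hout (b + 1) (.inr b.lt_succ_self)]
    exact mu.strictAnti_beta b.lt_succ_self
  have hhigh : lam.beta a - n < lam.beta b := by
    have := (hrow b).2 ⟨hab, le_rfl⟩
    rw [← hbeta]
    simp only [beta]
    omega
  refine ⟨lam.beta a, lam.S_eq_range_beta ▸ mem_range_self a, ?_, ?_, ?_⟩
  · rw [S_eq_range_beta]
    exact lam.strictAnti_beta.notMem_range_of_lt_of_lt hlow hhigh
  · rw [S_eq_range_beta, S_eq_range_beta]
    exact lam.strictAnti_beta.range_eq_moveBead hab hout hmid hbeta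
  · rw [htS, rows_cells_sdiff, hrows, ncard_Icc_nat, S_eq_range_beta,
      lam.strictAnti_beta.ncard_range_inter_Ioo hab hlow hhigh]
    omega

end Ptn

namespace StripDecomp

open Abacus

theorem eventuallyPacked_and_neg_one_pow_sum_htS {n m : ℕ} {Λ : Ptn} {c : ℕ → Ptn} (hn : 0 < n)
    (h : StripDecomp n Λ m c) :
    EventuallyPacked n Λ.S ∧
      (-1 : ℤ) ^ (∑ t ∈ Finset.range m, htS ((c t).cells \ (c (t + 1)).cells)) =
        (-1) ^ (packInversions n Λ.S).ncard := by
  obtain ⟨rfl, hlast, hstep⟩ := h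
  induction m generalizing c with
  | zero =>
    rw [Ptn.S_eq_Iio_of_f_eq_zero hlast, packInversions_Iio hn]
    exact ⟨eventuallyPacked_Iio hn, by simp⟩
  | succ m ih =>
    obtain ⟨hpacked, hsign⟩ := ih (c := fun t => c (t + 1)) hlast
      fun t ht => hstep (t + 1) (by omega)
    obtain ⟨hsub, hD⟩ := hstep 0 m.succ_pos
    obtain ⟨s, hs, hsn, hS, hht⟩ := Ptn.exists_moveBead_of_isBorderStrip hn hsub hD
    rw [hS] at hpacked hsign
    have hpacked₀ := hpacked.of_moveBead hn hs hsn
    refine ⟨hpacked₀, ?_⟩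
    rw [Finset.sum_range_succ', pow_add, hsign, hht,
      neg_one_pow_ncard_packInversions_moveBead hn (c 0).bddAbove_S hs hsn
        (hpacked₀.finite_packInversions (c 0).bddAbove_S)
        (hpacked.finite_packInversions (bddAbove_moveBead (c 0).bddAbove_S))]

end StripDecomp

theorem strip_decomposition_sign_well_defined_general (n : ℕ) (hn : 0 < n) (Λ : Ptn)
    (m₁ m₂ : ℕ) (c₁ c₂ : ℕ → Ptn)
    (h₁ : StripDecomp n Λ m₁ c₁) (h₂ : StripDecomp n Λ m₂ c₂) :
    (-1 : ℤ) ^ (∑ t ∈ Finset.range m₁, htS ((c₁ t).cells \ (c₁ (t + 1)).cells))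
      = (-1 : ℤ) ^ (∑ t ∈ Finset.range m₂, htS ((c₂ t).cells \ (c₂ (t + 1)).cells)) := by
  rw [(h₁.eventuallyPacked_and_neg_one_pow_sum_htS hn).2,
    (h₂.eventuallyPacked_and_neg_one_pow_sum_htS hn).2]

/-- for a balanced `n`-colored partition `Λ`, the sign
`(−1)^{Σ ht(ν_i)}` is independent of the chosen decomposition into `n`-border strips. -/
theorem strip_decomposition_sign_well_defined (n : ℕ) (hn : 0 < n) (Λ : Ptn)
    (hbal : BalancedPtn n Λ) (m₁ m₂ : ℕ) (c₁ c₂ : ℕ → Ptn)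
    (h₁ : StripDecomp n Λ m₁ c₁) (h₂ : StripDecomp n Λ m₂ c₂) :
    (-1 : ℤ) ^ (∑ t ∈ Finset.range m₁, htS ((c₁ t).cells \ (c₁ (t + 1)).cells))
      = (-1 : ℤ) ^ (∑ t ∈ Finset.range m₂, htS ((c₂ t).cells \ (c₂ (t + 1)).cells)) :=
  strip_decomposition_sign_well_defined_general n hn Λ m₁ m₂ c₁ c₂ h₁ h₂
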